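/- Let 1 ≤ k ≤ n, let M be an n×n real symmetric positive-definite matrix, and let κ̂ ≥ 1 satisfy κ(M) ≤ κ̂. Then Var(Y_k(M)) ≤ (1/4)·(min{k, n−k}·log κ̂)². -/

import Mathlib

open Matrix Real Finset

/-- The log-determinant of the principal submatrix of `M` indexed by `s`. -/
noncomputable def logMinor {n : ℕ} (M : Matrix (Fin n) (Fin n) ℝ) (s : Finset (Fin n)) : ℝ :=
  Real.log (M.submatrix (fun i : {x // x ∈ s} => (i : Fin n))
    (fun i : {x // x ∈ s} => (i : Fin n))).det

/-- The mean of `Y_k(M)`, the log-minor of a uniformly random `k`-element index set. -/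
noncomputable def meanLM {n : ℕ} (k : ℕ) (M : Matrix (Fin n) (Fin n) ℝ) : ℝ :=
  (∑ s ∈ Finset.powersetCard k (Finset.univ : Finset (Fin n)), logMinor M s) / (n.choose k)

/-- The variance of `Y_k(M)` under the uniform distribution on `k`-element index sets. -/
noncomputable def varLM {n : ℕ} (k : ℕ) (M : Matrix (Fin n) (Fin n) ℝ) : ℝ :=
  (∑ s ∈ Finset.powersetCard k (Finset.univ : Finset (Fin n)),
    (logMinor M s - meanLM k M) ^ 2) / (n.choose k)

open Classical in
/-- `P(|Y_k(M) - E[Y_k(M)]| ≥ r)` under the uniform distribution on `k`-element index sets. -/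
noncomputable def probDevLM {n : ℕ} (k : ℕ) (M : Matrix (Fin n) (Fin n) ℝ) (r : ℝ) : ℝ :=
  (((Finset.powersetCard k (Finset.univ : Finset (Fin n))).filter
      (fun s => r ≤ |logMinor M s - meanLM k M|)).card : ℝ) / (n.choose k)

/-- The largest eigenvalue `λ₁(M)` of a Hermitian matrix. -/
noncomputable def maxEig {n : ℕ} {M : Matrix (Fin n) (Fin n) ℝ} (hM : M.IsHermitian) : ℝ :=
  ⨆ i, hM.eigenvalues i

/-- The smallest eigenvalue `λₙ(M)` of a Hermitian matrix. -/
noncomputable def minEig {n : ℕ} {M : Matrix (Fin n) (Fin n) ℝ} (hM : M.IsHermitian) : ℝ :=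
  ⨅ i, hM.eigenvalues i

/-- The condition number `κ(M) = λ₁(M) / λₙ(M)` of a Hermitian matrix. -/
noncomputable def condNum {n : ℕ} {M : Matrix (Fin n) (Fin n) ℝ} (hM : M.IsHermitian) : ℝ :=
  maxEig hM / minEig hM

/-!
A principal submatrix of `M` is a compression of `M`, so `λₙ ≤ M ≤ λ₁` in the Loewner order
passes to it and its spectrum lies in `[λₙ, λ₁]`. Hence `log det M_I` lies in an interval of
length `k log κ`. By Jacobi's identity `det M_I = det M · det (M⁻¹)_{Iᶜ}`, and `M⁻¹` has spectrum
in `[λ₁⁻¹, λₙ⁻¹]`, so `log det M_I` also lies in an interval of length `(n - k) log κ`.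
Popoviciu's inequality `Var ≤ (length of the range)² / 4` concludes.
-/

open scoped MatrixOrder ComplexOrder

namespace Matrix

variable {n m : Type*} [Fintype n] [DecidableEq n] [Fintype m] [DecidableEq m]

theorem IsHermitian.spectrum_submatrix_subset_Icc {𝕜 : Type*} [RCLike 𝕜] {P : Matrix n n 𝕜}
    (hP : P.IsHermitian) {a b : ℝ} (h : spectrum ℝ P ⊆ Set.Icc a b) {e : m → n}
    (he : Function.Injective e) : spectrum ℝ (P.submatrix e e) ⊆ Set.Icc a b := by
  have hsub (r : ℝ) : algebraMap ℝ (Matrix m m 𝕜) r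
      = (algebraMap ℝ (Matrix n n 𝕜) r).submatrix e e := by
    rw [Algebra.algebraMap_eq_smul_one, Algebra.algebraMap_eq_smul_one,
      ← submatrix_one _ he]
    rfl
  have hlo : algebraMap ℝ _ a ≤ P.submatrix e e := by
    rw [le_iff, hsub]
    exact ((algebraMap_le_iff_le_spectrum hP.isSelfAdjoint).2 fun x hx => (h hx).1).submatrix e
  have hhi : P.submatrix e e ≤ algebraMap ℝ _ b := by
    rw [le_iff, hsub]
    exact ((le_algebraMap_iff_spectrum_le hP.isSelfAdjoint).2 fun x hx => (h hx).2).submatrix e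
  have hPe := (hP.submatrix e).isSelfAdjoint
  exact fun x hx => ⟨(algebraMap_le_iff_le_spectrum hPe).1 hlo x hx,
    (le_algebraMap_iff_spectrum_le hPe).1 hhi x hx⟩

theorem IsHermitian.det_mem_Icc_of_spectrum_subset {Q : Matrix m m ℝ} (hQ : Q.IsHermitian)
    {a b : ℝ} (ha : 0 ≤ a) (h : spectrum ℝ Q ⊆ Set.Icc a b) :
    Q.det ∈ Set.Icc (a ^ Fintype.card m) (b ^ Fintype.card m) := by
  have hev (i : m) : hQ.eigenvalues i ∈ Set.Icc a b := h (hQ.eigenvalues_mem_spectrum_real i)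
  rw [hQ.det_eq_prod_eigenvalues, ← card_univ, ← prod_const, ← prod_const]
  simp only [RCLike.ofReal_real_eq_id, id]
  exact ⟨prod_le_prod (fun _ _ => ha) fun i _ => (hev i).1,
    prod_le_prod (fun i _ => ha.trans (hev i).1) fun i _ => (hev i).2⟩

theorem IsHermitian.det_submatrix_mem_Icc {P : Matrix n n ℝ} (hP : P.IsHermitian) {a b : ℝ}
    (ha : 0 ≤ a) (h : spectrum ℝ P ⊆ Set.Icc a b) {e : m → n} (he : Function.Injective e) :
    (P.submatrix e e).det ∈ Set.Icc (a ^ Fintype.card m) (b ^ Fintype.card m) :=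
  (hP.submatrix e).det_mem_Icc_of_spectrum_subset ha (hP.spectrum_submatrix_subset_Icc h he)

theorem IsHermitian.log_det_submatrix_mem_Icc {P : Matrix n n ℝ} (hP : P.IsHermitian) {a b : ℝ}
    (ha : 0 < a) (h : spectrum ℝ P ⊆ Set.Icc a b) {e : m → n} (he : Function.Injective e) :
    Real.log (P.submatrix e e).det
      ∈ Set.Icc (Fintype.card m * Real.log a) (Fintype.card m * Real.log b) := by
  obtain ⟨hlo, hhi⟩ := hP.det_submatrix_mem_Icc ha.le h he
  rw [← Real.log_pow, ← Real.log_pow]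
  exact ⟨Real.log_le_log (pow_pos ha _) hlo,
    Real.log_le_log ((pow_pos ha _).trans_le hlo) hhi⟩

theorem det_fromBlocks_mul_det_toBlocks₂₂ {R : Type*} [CommRing R] {A : Matrix m m R}
    {B : Matrix m n R} {C : Matrix n m R} {D : Matrix n n R} {Q : Matrix (m ⊕ n) (m ⊕ n) R}
    (hQ : fromBlocks A B C D * Q = 1) :
    (fromBlocks A B C D).det * Q.toBlocks₂₂.det = A.det := by
  rw [← fromBlocks_toBlocks Q, fromBlocks_multiply, ← fromBlocks_one, fromBlocks_inj] at hQ
  obtain ⟨-, h₁₂, -, h₂₂⟩ := hQ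
  have hprod : fromBlocks A B C D * fromBlocks 1 Q.toBlocks₁₂ 0 Q.toBlocks₂₂
      = fromBlocks A 0 C 1 := by
    rw [fromBlocks_multiply, h₁₂, h₂₂]
    simp
  simpa [det_fromBlocks_zero₂₁, det_fromBlocks_zero₁₂] using congrArg det hprod

theorem det_mul_det_inv_submatrix_compl {R : Type*} [CommRing R] {M : Matrix n n R}
    (hM : IsUnit M.det) (s : Finset n) :
    M.det * (M⁻¹.submatrix (Subtype.val : {i // i ∉ s} → n) Subtype.val).det
      = (M.submatrix (Subtype.val : s → n) Subtype.val).det := by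
  set e := Equiv.sumCompl (· ∈ s)
  have hinv : M.submatrix e e * M⁻¹.submatrix e e = 1 := by
    rw [submatrix_mul_equiv, mul_nonsing_inv _ hM, submatrix_one_equiv]
  rw [← fromBlocks_toBlocks (M.submatrix e e)] at hinv
  rw [← det_submatrix_equiv_self e M, ← fromBlocks_toBlocks (M.submatrix e e)]
  convert det_fromBlocks_mul_det_toBlocks₂₂ hinv <;> rfl

end Matrix

theorem spectrum.inv_subset_Icc {𝕜 A : Type*} [Field 𝕜] [LinearOrder 𝕜] [IsStrictOrderedRing 𝕜]
    [Ring A] [Algebra 𝕜 A] (u : Aˣ) {a b : 𝕜} (ha : 0 < a)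
    (h : spectrum 𝕜 (u : A) ⊆ Set.Icc a b) :
    spectrum 𝕜 (↑u⁻¹ : A) ⊆ Set.Icc b⁻¹ a⁻¹ := by
  rw [← spectrum.map_inv]
  intro x hx
  obtain ⟨hax, hxb⟩ := h (Set.mem_inv.1 hx)
  have hx0 : 0 < x := inv_pos.1 (ha.trans_le hax)
  exact ⟨inv_le_of_inv_le₀ hx0 hxb, le_inv_of_le_inv₀ ha hax⟩

theorem Finset.sum_sq_sub_average_div_card_le {ι : Type*} (T : Finset ι) (f : ι → ℝ) {a b : ℝ}
    (h : ∀ i ∈ T, f i ∈ Set.Icc a b) :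
    (∑ i ∈ T, (f i - (∑ j ∈ T, f j) / #T) ^ 2) / #T ≤ ((b - a) / 2) ^ 2 := by
  rcases T.eq_empty_or_nonempty with rfl | hT
  · simp only [card_empty, Nat.cast_zero, div_zero]
    positivity
  set μ := (∑ j ∈ T, f j) / #T with hμ
  set c := (a + b) / 2 with hc
  have hcard : (0 : ℝ) < #T := by exact_mod_cast hT.card_pos
  have hcentered : ∑ i ∈ T, (f i - μ) = 0 := by
    rw [sum_sub_distrib, sum_const, nsmul_eq_mul, hμ, mul_div_cancel₀ _ hcard.ne', sub_self]
  have hshift : ∑ i ∈ T, (f i - c) ^ 2 = ∑ i ∈ T, (f i - μ) ^ 2 + #T * (μ - c) ^ 2 := by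
    have hterm (i : ι) :
        (f i - c) ^ 2 = (f i - μ) ^ 2 + 2 * (μ - c) * (f i - μ) + (μ - c) ^ 2 := by
      ring
    simp only [hterm, sum_add_distrib, ← mul_sum, hcentered, mul_zero, add_zero, sum_const,
      nsmul_eq_mul]
  calc (∑ i ∈ T, (f i - μ) ^ 2) / #T ≤ (∑ i ∈ T, (f i - c) ^ 2) / #T := by
        rw [hshift]; gcongr; exact le_add_of_nonneg_right (by positivity)
    _ ≤ (∑ _i ∈ T, ((b - a) / 2) ^ 2) / #T := by
        refine div_le_div_of_nonneg_right (sum_le_sum fun i hi => ?_) hcard.le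
        obtain ⟨hai, hib⟩ := h i hi
        exact sq_le_sq' (by linarith) (by linarith)
    _ = ((b - a) / 2) ^ 2 := by rw [sum_const, nsmul_eq_mul, mul_div_cancel_left₀ _ hcard.ne']

section LogMinor

variable {n : ℕ} {M : Matrix (Fin n) (Fin n) ℝ} {a b : ℝ}

theorem logMinor_eq (s : Finset (Fin n)) :
    logMinor M s = Real.log (M.submatrix (Subtype.val : s → Fin n) Subtype.val).det :=
  rfl

theorem logMinor_mem_Icc (hM : M.IsHermitian) (ha : 0 < a) (h : spectrum ℝ M ⊆ Set.Icc a b)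
    (s : Finset (Fin n)) : logMinor M s ∈ Set.Icc (#s * Real.log a) (#s * Real.log b) := by
  rw [logMinor_eq, ← Fintype.card_coe s]
  exact hM.log_det_submatrix_mem_Icc ha h Subtype.val_injective

theorem logMinor_mem_Icc_compl (hM : M.IsHermitian) (ha : 0 < a) (hab : a ≤ b)
    (h : spectrum ℝ M ⊆ Set.Icc a b) (s : Finset (Fin n)) :
    logMinor M s ∈ Set.Icc (Real.log M.det - #sᶜ * Real.log b)
      (Real.log M.det - #sᶜ * Real.log a) := by
  have hdet : 0 < M.det := (pow_pos ha _).trans_le (hM.det_mem_Icc_of_spectrum_subset ha.le h).1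
  have hunit : IsUnit M := (isUnit_iff_isUnit_det M).2 (isUnit_iff_ne_zero.2 hdet.ne')
  have hinv : spectrum ℝ M⁻¹ ⊆ Set.Icc b⁻¹ a⁻¹ := by
    obtain ⟨u, rfl⟩ := hunit
    rw [← coe_units_inv]
    exact spectrum.inv_subset_Icc u ha h
  have hb : 0 < b⁻¹ := inv_pos.2 (ha.trans_le hab)
  have hcompl : Fintype.card {i // i ∉ s} = #sᶜ := by
    rw [Fintype.card_subtype_compl, Fintype.card_coe, card_compl]
  have hlog := hM.inv.log_det_submatrix_mem_Icc hb hinv (Subtype.val_injective (p := (· ∉ s)))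
  have hpos := (pow_pos hb _).trans_le
    (hM.inv.det_submatrix_mem_Icc hb.le hinv (Subtype.val_injective (p := (· ∉ s)))).1
  rw [hcompl, Real.log_inv, Real.log_inv] at hlog
  rw [logMinor_eq, ← det_mul_det_inv_submatrix_compl (isUnit_iff_ne_zero.2 hdet.ne') s,
    Real.log_mul hdet.ne' hpos.ne']
  constructor <;> linarith [hlog.1, hlog.2]

end LogMinor

section Variance

variable {n k : ℕ} {M : Matrix (Fin n) (Fin n) ℝ} {a b : ℝ}

theorem varLM_le_of_forall_mem_Icc {lo hi : ℝ}
    (h : ∀ s ∈ powersetCard k (univ : Finset (Fin n)), logMinor M s ∈ Set.Icc lo hi) :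
    varLM k M ≤ ((hi - lo) / 2) ^ 2 := by
  have hcard : (n.choose k : ℝ) = #(powersetCard k (univ : Finset (Fin n))) := by
    rw [card_powersetCard, card_univ, Fintype.card_fin]
  rw [varLM, meanLM, hcard]
  exact sum_sq_sub_average_div_card_le _ _ h

theorem varLM_le_of_spectrum_subset (hkn : k ≤ n) (hM : M.IsHermitian) (ha : 0 < a)
    (hab : a ≤ b) (h : spectrum ℝ M ⊆ Set.Icc a b) :
    varLM k M ≤ 1 / 4 * (min (k : ℝ) (n - k) * Real.log (b / a)) ^ 2 := by
  rw [Real.log_div (ha.trans_le hab).ne' ha.ne']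
  rcases min_choice (k : ℝ) (n - k) with hmin | hmin <;> rw [hmin]
  · calc varLM k M ≤ ((k * Real.log b - k * Real.log a) / 2) ^ 2 :=
          varLM_le_of_forall_mem_Icc fun s hs => by
            simpa only [(mem_powersetCard_univ.1 hs)] using logMinor_mem_Icc hM ha h s
      _ = _ := by ring
  · have hcompl (s : Finset (Fin n)) (hs : s ∈ powersetCard k univ) : (#sᶜ : ℝ) = n - k := by
      rw [card_compl, Fintype.card_fin, mem_powersetCard_univ.1 hs, Nat.cast_sub hkn]
    calc varLM k M ≤ (((Real.log M.det - (n - k) * Real.log a)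
          - (Real.log M.det - (n - k) * Real.log b)) / 2) ^ 2 :=
          varLM_le_of_forall_mem_Icc fun s hs => by
            simpa only [hcompl s hs] using logMinor_mem_Icc_compl hM ha hab h s
      _ = _ := by ring

end Variance

theorem Matrix.IsHermitian.spectrum_subset_Icc_minEig_maxEig {n : ℕ} {M : Matrix (Fin n) (Fin n) ℝ}
    (hM : M.IsHermitian) : spectrum ℝ M ⊆ Set.Icc (minEig hM) (maxEig hM) := by
  rw [hM.spectrum_real_eq_range_eigenvalues]
  rintro _ ⟨i, rfl⟩
  exact ⟨ciInf_le (Set.finite_range _).bddBelow i, le_ciSup (Set.finite_range _).bddAbove i⟩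

theorem Matrix.PosDef.minEig_pos {n : ℕ} [NeZero n] {M : Matrix (Fin n) (Fin n) ℝ}
    (hM : M.PosDef) : 0 < minEig hM.1 := by
  obtain ⟨i, hi⟩ := exists_eq_ciInf_of_finite (f := hM.1.eigenvalues)
  rw [minEig, ← hi]
  exact hM.eigenvalues_pos i

theorem log_minor_variance_bound_support_general {n k : ℕ} (hk1 : 1 ≤ k) (hkn : k ≤ n)
    (M : Matrix (Fin n) (Fin n) ℝ) (hM : M.PosDef) (khat : ℝ)
    (hcond : condNum hM.1 ≤ khat) :
    varLM k M ≤ (1 / 4) * ((min k (n - k) : ℝ) * Real.log khat) ^ 2 := by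
  have : NeZero n := ⟨by omega⟩
  have ha := hM.minEig_pos
  have hspec := hM.1.spectrum_subset_Icc_minEig_maxEig
  have hab : minEig hM.1 ≤ maxEig hM.1 :=
    Set.nonempty_Icc.1 ⟨_, hspec (hM.1.eigenvalues_mem_spectrum_real 0)⟩
  have hκ : 1 ≤ condNum hM.1 := (one_le_div ha).2 hab
  have hmin : 0 ≤ min (k : ℝ) (n - k) :=
    le_min (Nat.cast_nonneg k) (sub_nonneg.2 (Nat.cast_le.2 hkn))
  calc varLM k M ≤ 1 / 4 * (min (k : ℝ) (n - k) * Real.log (condNum hM.1)) ^ 2 :=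
        varLM_le_of_spectrum_subset hkn hM.1 ha hab hspec
    _ ≤ _ := by
        gcongr
        exact mul_nonneg hmin (Real.log_nonneg hκ)

theorem log_minor_variance_bound_support {n k : ℕ} (hk1 : 1 ≤ k) (hkn : k ≤ n)
    (M : Matrix (Fin n) (Fin n) ℝ) (hM : M.PosDef) (khat : ℝ) (hkhat : 1 ≤ khat)
    (hcond : condNum hM.1 ≤ khat) :
    varLM k M ≤ (1 / 4) * ((min k (n - k) : ℝ) * Real.log khat) ^ 2 :=
  log_minor_variance_bound_support_general hk1 hkn M hM khat hcond
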